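/- arXiv:math/0607491 — 2 statements merged into one kernel-verified Lean document; each statement's English description precedes it below -/
import Mathlib

section
/- The alternating harmonic sum A_n = 1 - 1/2 + 1/3 - ... + (-1)^{n-1}/n is not an integer for any n ≥ 2. -/
/-!
Writing `Aₙ = ∑_{i<n} (-1)^i f i` with `f i = 1/(i+1)` antitone and nonnegative, peeling off the first
term gives `S_{n+1}(f) = f 0 - S_n(f ∘ succ)`, so by induction every alternating sum of an antitone
nonnegative sequence lies in `[0, f 0]`. Peeling off two terms, for `n ≥ 2` we get
`1/2 = 1 - 1/2 ≤ Aₙ ≤ 1 - 1/2 + 1/3 = 5/6`, and there is no integer in between.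
-/

open Finset

theorem sum_range_succ_neg_one_pow_mul {R : Type*} [Ring R] (f : ℕ → R) (n : ℕ) :
    ∑ i ∈ range (n + 1), (-1) ^ i * f i = f 0 - ∑ i ∈ range n, (-1) ^ i * f (i + 1) := by
  rw [sum_range_succ', sub_eq_add_neg, add_comm, ← sum_neg_distrib]
  simp only [pow_succ, pow_zero, one_mul, mul_neg_one, neg_mul]

section AlternatingSum

variable {R : Type*} [CommRing R] [LinearOrder R] [IsStrictOrderedRing R]

theorem Antitone.sum_range_neg_one_pow_mul_mem_Icc {f : ℕ → R} (hf : Antitone f)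
    (hf0 : ∀ i, 0 ≤ f i) (n : ℕ) :
    ∑ i ∈ range n, (-1) ^ i * f i ∈ Set.Icc 0 (f 0) := by
  induction n generalizing f with
  | zero => simpa using hf0 0
  | succ n ih =>
    obtain ⟨h_nonneg, h_le⟩ := ih (f := fun i => f (i + 1)) (fun _ _ h => hf (Nat.succ_le_succ h))
      (fun i => hf0 (i + 1))
    have h10 : f 1 ≤ f 0 := hf zero_le_one
    rw [sum_range_succ_neg_one_pow_mul]
    constructor <;> linarith

theorem Antitone.sum_range_add_two_neg_one_pow_mul_mem_Icc {f : ℕ → R} (hf : Antitone f)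
    (hf0 : ∀ i, 0 ≤ f i) (n : ℕ) :
    ∑ i ∈ range (n + 2), (-1) ^ i * f i ∈ Set.Icc (f 0 - f 1) (f 0 - f 1 + f 2) := by
  obtain ⟨h_nonneg, h_le⟩ :=
    Antitone.sum_range_neg_one_pow_mul_mem_Icc (f := fun i => f (i + 2))
      (fun _ _ h => hf (Nat.add_le_add_right h 2)) (fun i => hf0 (i + 2)) n
  rw [sum_range_succ_neg_one_pow_mul, sum_range_succ_neg_one_pow_mul]
  constructor <;> linarith

end AlternatingSum

theorem sum_Icc_neg_one_pow_div_eq_sum_range (n : ℕ) :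
    ∑ i ∈ Icc 1 n, (-1 : ℚ) ^ (i - 1) / i = ∑ i ∈ range n, (-1) ^ i * (1 / ((i : ℚ) + 1)) := by
  rw [← Ico_add_one_right_eq_Icc, sum_Ico_eq_sum_range]
  simp [add_comm, div_eq_mul_inv]

theorem antitone_one_div_nat_add_one : Antitone fun i : ℕ => 1 / ((i : ℚ) + 1) :=
  fun _ _ h => one_div_le_one_div_of_le (by positivity) (by exact_mod_cast Nat.succ_le_succ h)

theorem alternating_harmonic_not_integer (n : ℕ) (hn : 2 ≤ n) :
    ¬ ∃ z : ℤ, (∑ i ∈ Finset.Icc 1 n, (-1 : ℚ) ^ (i - 1) / i) = z := by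
  rintro ⟨z, hz⟩
  obtain ⟨m, rfl⟩ := Nat.exists_eq_add_of_le' hn
  obtain ⟨h_lower, h_upper⟩ :=
    antitone_one_div_nat_add_one.sum_range_add_two_neg_one_pow_mul_mem_Icc
      (fun i => by positivity) m
  rw [← sum_Icc_neg_one_pow_div_eq_sum_range, hz] at h_lower h_upper
  norm_num at h_lower h_upper
  have hz_pos : (0 : ℤ) < z := by exact_mod_cast (by linarith : (0 : ℚ) < z)
  have hz_lt_one : z < 1 := by exact_mod_cast (by linarith : (z : ℚ) < 1)
  omega
end

section
/- Let n be even with p = (3n+2)/2 prime and n ≥ 4. Writing A_n = a/b in lowest terms with a, b coprime, p divides the numerator a. -/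
/-!
By Catalan's identity, `A_{2m} = ∑_{m < i ≤ 2m} 1/i`. For `p = 3m + 1` this range is stable under
`i ↦ p - i`, and `1/i + 1/(p - i) = p / (i (p - i))`, so `2 A_{2m}` is `p` times a rational whose
denominator is prime to `p`; hence `A_{2m}` has `p`-adic norm less than one.
-/

open Finset

theorem sum_Icc_neg_one_pow_div_eq_sum_Ioc {K : Type*} [Field K] [CharZero K] (m : ℕ) :
    ∑ i ∈ Icc 1 (2 * m), (-1 : K) ^ (i - 1) / i = ∑ i ∈ Ioc m (2 * m), (i : K)⁻¹ := by
  induction m with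
  | zero => simp
  | succ m ih =>
    have htop : ∑ i ∈ Ioc m (2 * m + 1 + 1), (i : K)⁻¹
        = ∑ i ∈ Ioc m (2 * m), (i : K)⁻¹ + ((2 * m + 1 : ℕ) : K)⁻¹ + ((2 * m + 1 + 1 : ℕ) : K)⁻¹ := by
      rw [sum_Ioc_succ_top (by omega), sum_Ioc_succ_top (by omega)]
    have hbot : ∑ i ∈ Ioc m (2 * m + 1 + 1), (i : K)⁻¹
        = ((m + 1 : ℕ) : K)⁻¹ + ∑ i ∈ Ioc (m + 1) (2 * m + 1 + 1), (i : K)⁻¹ := by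
      rw [← sum_Ioc_consecutive _ m.le_succ (by omega), Nat.Ioc_succ_singleton, sum_singleton]
    have hhalf : ((2 * m + 1 + 1 : ℕ) : K)⁻¹ = 2⁻¹ * ((m + 1 : ℕ) : K)⁻¹ := by
      rw [← mul_inv]; push_cast; ring_nf
    rw [show 2 * (m + 1) = 2 * m + 1 + 1 by ring, sum_Icc_succ_top (by omega),
      sum_Icc_succ_top (by omega), ih]
    simp only [Nat.add_sub_cancel, pow_succ, (even_two_mul m).neg_one_pow]
    linear_combination hbot - htop - 2 * hhalf

theorem Rat.natCast_dvd_num_of_padicNorm_lt_one {p : ℕ} [Fact p.Prime] {q : ℚ}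
    (hq : padicNorm p q < 1) : (p : ℤ) ∣ q.num := by
  rw [← padicNorm.int_lt_one_iff, ← Rat.mul_den_eq_num, padicNorm.mul]
  calc padicNorm p q * padicNorm p (q.den : ℤ) ≤ padicNorm p q * 1 :=
        mul_le_mul_of_nonneg_left (padicNorm.of_int _) (padicNorm.nonneg _)
    _ < 1 := by rwa [mul_one]

theorem two_mul_sum_inv_eq_mul_sum_inv_mul_sub {K : Type*} [Field K] [CharZero K] {p : ℕ}
    {s : Finset ℕ} (hs : ∀ i ∈ s, 0 < i ∧ i < p) (hrefl : ∀ i ∈ s, p - i ∈ s) :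
    2 * ∑ i ∈ s, (i : K)⁻¹ = p * ∑ i ∈ s, ((i : K) * (p - i : ℕ))⁻¹ := by
  have hreflect : ∑ i ∈ s, (i : K)⁻¹ = ∑ i ∈ s, ((p - i : ℕ) : K)⁻¹ :=
    sum_nbij' (p - ·) (p - ·) hrefl hrefl (fun i hi => by have := hs i hi; omega)
      (fun i hi => by have := hs i hi; omega) (fun i hi => by have := hs i hi; congr; omega)
  rw [two_mul]
  nth_rw 2 [hreflect]
  rw [← sum_add_distrib, mul_sum]
  refine sum_congr rfl fun i hi => ?_
  obtain ⟨hi0, hip⟩ := hs i hi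
  have hi : (i : K) ≠ 0 := Nat.cast_ne_zero.2 hi0.ne'
  have hpi : ((p - i : ℕ) : K) ≠ 0 := Nat.cast_ne_zero.2 (by omega)
  field_simp
  rw [Nat.cast_sub hip.le]
  ring

theorem natCast_dvd_num_sum_inv_of_reflect {p : ℕ} [hp : Fact p.Prime] (hp2 : p ≠ 2)
    {s : Finset ℕ} (hs : ∀ i ∈ s, 0 < i ∧ i < p) (hrefl : ∀ i ∈ s, p - i ∈ s) :
    (p : ℤ) ∣ (∑ i ∈ s, (i : ℚ)⁻¹).num := by
  apply Rat.natCast_dvd_num_of_padicNorm_lt_one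
  have hterm : ∀ i ∈ s, padicNorm p ((i : ℚ) * (p - i : ℕ))⁻¹ = 1 := fun i hi => by
    obtain ⟨hi0, hip⟩ := hs i hi
    have hndvd : ¬p ∣ i * (p - i) := hp.out.dvd_mul.not.2 <|
      not_or_intro (Nat.not_dvd_of_pos_of_lt hi0 hip) (Nat.not_dvd_of_pos_of_lt (by omega) (by omega))
    rw [← Nat.cast_mul, ← one_div, padicNorm.div, padicNorm.one,
      (padicNorm.nat_eq_one_iff _).2 hndvd, div_one]
  have hsum : padicNorm p (∑ i ∈ s, ((i : ℚ) * (p - i : ℕ))⁻¹) ≤ 1 :=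
    padicNorm.sum_le' (fun i hi => (hterm i hi).le) zero_le_one
  have htwo : padicNorm p 2 = 1 := by
    exact_mod_cast (padicNorm.nat_eq_one_iff 2).2
      ((Nat.prime_dvd_prime_iff_eq hp.out Nat.prime_two).not.2 hp2)
  calc padicNorm p (∑ i ∈ s, (i : ℚ)⁻¹)
      = padicNorm p (2 * ∑ i ∈ s, (i : ℚ)⁻¹) := by rw [padicNorm.mul, htwo, one_mul]
    _ = (p : ℚ)⁻¹ * padicNorm p (∑ i ∈ s, ((i : ℚ) * (p - i : ℕ))⁻¹) := by
      rw [two_mul_sum_inv_eq_mul_sum_inv_mul_sub hs hrefl, padicNorm.mul,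
        padicNorm.padicNorm_p_of_prime]
    _ ≤ (p : ℚ)⁻¹ := mul_le_of_le_one_right (by positivity) hsum
    _ < 1 := inv_lt_one_of_one_lt₀ (by exact_mod_cast hp.out.one_lt)

theorem prime_dvd_num_even_general (n : ℕ) (heven : Even n)
    (hp : Nat.Prime ((3 * n + 2) / 2)) :
    ((3 * n + 2 : ℤ) / 2) ∣ (∑ i ∈ Finset.Icc 1 n, (-1 : ℚ) ^ (i - 1) / i).num := by
  obtain ⟨m, rfl⟩ := heven
  have hpm : (3 * (m + m) + 2) / 2 = 3 * m + 1 := by omega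
  have : Fact (3 * m + 1).Prime := ⟨hpm ▸ hp⟩
  have hcast : (3 * ((m + m : ℕ) : ℤ) + 2) / 2 = ((3 * m + 1 : ℕ) : ℤ) := by push_cast; omega
  rw [hcast, ← two_mul, sum_Icc_neg_one_pow_div_eq_sum_Ioc]
  refine natCast_dvd_num_sum_inv_of_reflect (by omega) (fun i hi => ?_) (fun i hi => ?_) <;>
    simp only [mem_Ioc] at hi ⊢ <;> omega

theorem prime_dvd_num_even (n : ℕ) (hn : 4 ≤ n) (heven : Even n)
    (hp : Nat.Prime ((3 * n + 2) / 2)) :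
    ((3 * n + 2 : ℤ) / 2) ∣ (∑ i ∈ Finset.Icc 1 n, (-1 : ℚ) ^ (i - 1) / i).num :=
  prime_dvd_num_even_general n heven hp
end
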